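/- Let B' be the C-algebra with generators a, b, z and relations a² = b² = z²/4, [z,a] = [z,b] = 0, graded with deg a = deg b = deg z = 2. Then for every k ≥ 0, the degree-2k component of the center of B' has dimension 1 + ⌊k/2⌋. -/

import Mathlib

/-- The defining relations of the algebra `B'`: generators `a = ι 0`, `b = ι 1`,
`z = ι 2` with `a² = b² = z²/4` and `z` commuting with `a` and `b`. -/
inductive BpRel : FreeAlgebra ℂ (Fin 3) → FreeAlgebra ℂ (Fin 3) → Prop
  | ha : BpRel (FreeAlgebra.ι ℂ 0 * FreeAlgebra.ι ℂ 0)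
      ((4 : ℂ)⁻¹ • (FreeAlgebra.ι ℂ 2 * FreeAlgebra.ι ℂ 2))
  | hb : BpRel (FreeAlgebra.ι ℂ 1 * FreeAlgebra.ι ℂ 1)
      ((4 : ℂ)⁻¹ • (FreeAlgebra.ι ℂ 2 * FreeAlgebra.ι ℂ 2))
  | hza : BpRel (FreeAlgebra.ι ℂ 2 * FreeAlgebra.ι ℂ 0)
      (FreeAlgebra.ι ℂ 0 * FreeAlgebra.ι ℂ 2)
  | hzb : BpRel (FreeAlgebra.ι ℂ 2 * FreeAlgebra.ι ℂ 1)
      (FreeAlgebra.ι ℂ 1 * FreeAlgebra.ι ℂ 2)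

/-- The algebra `B'`. -/
abbrev Bprime := RingQuot BpRel

noncomputable def aB : Bprime := RingQuot.mkAlgHom ℂ BpRel (FreeAlgebra.ι ℂ 0)
noncomputable def bB : Bprime := RingQuot.mkAlgHom ℂ BpRel (FreeAlgebra.ι ℂ 1)
noncomputable def zB : Bprime := RingQuot.mkAlgHom ℂ BpRel (FreeAlgebra.ι ℂ 2)

noncomputable def genB : Fin 3 → Bprime
  | 0 => aB
  | 1 => bB
  | 2 => zB

/-- The span of the images in `B'` of words of length `k` in the generators `a, b, z`:
since `deg a = deg b = deg z = 2`, this is the degree-`2k` component of `B'`. -/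
noncomputable def BprimeDeg (k : ℕ) : Submodule ℂ Bprime :=
  Submodule.span ℂ {x | ∃ l : List (Fin 3), l.length = k ∧ x = (l.map genB).prod}

/-!
The assignment `a ↦ [[0, T], [T⁻¹, 0]]`, `b ↦ [[0, T⁻¹], [T, 0]]`, `z ↦ 2` defines a representation
of `B'` by `2 × 2` matrices over `ℂ[T, T⁻¹]`, in which `a` and `b` become involutions generating a
copy of the infinite dihedral group (the matrices `dihedralMatrix n`).

Since `a² = b² = z²/4` and `z` is central, every word of length `k` is a multiple of a normal form
`z^(k - |n|) w_n` with `|n| ≤ k`, where `w_n` is the alternating word of signed length `n`. These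
map to the linearly independent matrices `2^(k - |n|) dihedralMatrix n`, so the representation is
injective on the degree-`2k` component. A central element maps to a matrix commuting with both
involutions, i.e. to a scalar matrix, whose trace lies in the span of the `T^(2j) + T^(-2j)` with
`j ≤ k/2`. Conversely `z^(k - 2j) ((ab)^j + (ba)^j)` is central of degree `2k` and maps to
`2^(k - 2j) (T^(2j) + T^(-2j))`. Hence the top-left matrix entry identifies the degree-`2k` part of
the centre with that `(k/2 + 1)`-dimensional span.
-/

open LaurentPolynomial

theorem Commute.mul_pow_add_mul_pow {R : Type*} [Semiring R] {x y : R} (h : Commute (x * x) y)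
    (j : ℕ) : Commute x ((x * y) ^ j + (y * x) ^ j) := by
  have h₁ : SemiconjBy x (x * y) (y * x) := by
    simp only [SemiconjBy, ← mul_assoc, h.eq]
  have h₂ : SemiconjBy x (y * x) (x * y) := (mul_assoc x y x).symm
  have := (h₁.pow_right j).add_right (h₂.pow_right j)
  rwa [add_comm ((y * x) ^ j)] at this

theorem LinearIndependent.of_pairwise_dual_eq_zero_ne_zero {K V ι : Type*} [Field K]
    [AddCommGroup V] [Module K V] (v : ι → V) (f : ι → Module.Dual K V)
    (h₀ : Pairwise fun i j => f i (v j) = 0) (h₁ : ∀ i, f i (v i) ≠ 0) : LinearIndependent K v :=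
  .of_pairwise_dual_eq_zero_one v (fun i => (f i (v i))⁻¹ • f i)
    (fun i j hij => by simp [h₀ hij]) (fun i => by simp [h₁ i])

noncomputable def dihedralMatrix (n : ℤ) : Matrix (Fin 2) (Fin 2) ℂ[T;T⁻¹] :=
  if Even n then !![T n, 0; 0, T (-n)] else !![0, T n; T (-n), 0]

namespace dihedralMatrix

lemma zero : dihedralMatrix 0 = 1 := by
  simp [dihedralMatrix, T_zero, Matrix.one_fin_two]

lemma mul_of_even {s : ℤ} (hs : Even s) (m : ℤ) :
    dihedralMatrix s * dihedralMatrix m = dihedralMatrix (s + m) := by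
  by_cases hm : Even m <;>
    simp only [dihedralMatrix, hs, hm, Int.even_add, Matrix.mul_fin_two, ← T_add, neg_add,
      mul_zero, zero_mul, add_zero, zero_add, if_true, if_false, iff_false, not_true_eq_false]

lemma mul_of_odd {s : ℤ} (hs : Odd s) (m : ℤ) :
    dihedralMatrix s * dihedralMatrix m = dihedralMatrix (s - m) := by
  have hs' : ¬ Even s := Int.not_even_iff_odd.mpr hs
  have hsm : Even (s + -m) ↔ ¬ Even m := by simp [← sub_eq_add_neg, Int.even_sub, hs']
  by_cases hm : Even m <;>
    simp only [dihedralMatrix, hs', hm, hsm, Matrix.mul_fin_two, ← T_add, sub_eq_add_neg, neg_add,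
      neg_neg, mul_zero, zero_mul, add_zero, zero_add, if_true, if_false, not_true_eq_false,
      not_false_eq_true]

lemma pow_of_even {s : ℤ} (hs : Even s) (j : ℕ) :
    dihedralMatrix s ^ j = dihedralMatrix (j * s) := by
  induction j with
  | zero => simp [zero]
  | succ j ih => rw [pow_succ', ih, mul_of_even hs]; push_cast; ring_nf

lemma apply_zero_zero_add_apply_zero_one (n : ℤ) :
    dihedralMatrix n 0 0 + dihedralMatrix n 0 1 = T n := by
  by_cases hn : Even n <;> simp [dihedralMatrix, hn]

lemma trace_eq (n : ℤ) :
    (dihedralMatrix n).trace = if Even n then T n + T (-n) else 0 := by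
  by_cases hn : Even n <;> simp [dihedralMatrix, hn, Matrix.trace_fin_two]

lemma apply_zero_zero_of_even {n : ℤ} (hn : Even n) : dihedralMatrix n 0 0 = T n := by
  simp [dihedralMatrix, hn]

end dihedralMatrix

lemma eq_scalar_of_commute_dihedralMatrix {X : Matrix (Fin 2) (Fin 2) ℂ[T;T⁻¹]}
    (h₁ : Commute X (dihedralMatrix 1)) (h₂ : Commute X (dihedralMatrix (-1))) :
    X = Matrix.scalar (Fin 2) (X 0 0) := by
  have e₁ := congr_fun₂ h₁.eq
  have e₂ := congr_fun₂ h₂.eq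
  have h₀₀ := e₁ 0 0
  have h₀₁ := e₁ 0 1
  have h₀₀' := e₂ 0 0
  simp only [dihedralMatrix, Int.not_even_one, ↓reduceIte, Int.reduceNeg, Fin.isValue,
    Matrix.mul_apply, Matrix.of_apply, Matrix.cons_val', Matrix.cons_val_zero,
    Matrix.cons_val_fin_one, Fin.sum_univ_two, mul_zero, Matrix.cons_val_one, zero_add, zero_mul,
    T_mul, add_zero, mul_eq_mul_right_iff, even_neg, neg_neg] at h₀₀ h₀₁ h₀₀'
  have hT : (T 1 * T 1 - T (-1) * T (-1) : ℂ[T;T⁻¹]) ≠ 0 := by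
    rw [← T_add, ← T_add]
    intro h
    simpa using congrArg (·.coeff 2) h
  have hX₀₁ : X 0 1 = 0 := by
    refine (mul_eq_zero.mp ?_).resolve_right hT
    linear_combination T 1 * h₀₀' - T (-1) * h₀₀
  have hX₁₀ : X 1 0 = 0 := by
    rw [hX₀₁, zero_mul, eq_comm] at h₀₀
    exact (isUnit_T 1).mul_left_eq_zero.mp h₀₀
  have hX₁₁ : X 1 1 = X 0 0 := (h₀₁.resolve_right (isUnit_T 1).ne_zero).symm
  ext i j
  fin_cases i <;> fin_cases j <;> simp [hX₀₁, hX₁₀, hX₁₁]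

noncomputable def symmMonomial (j : ℕ) : ℂ[T;T⁻¹] := T (2 * j) + T (-(2 * j))

lemma linearIndependent_symmMonomial (N : ℕ) :
    LinearIndependent ℂ fun j : Fin N => symmMonomial j := by
  have hT (n : ℤ) : (T n : ℂ[T;T⁻¹]) = AddMonoidAlgebra.basis ℤ ℂ n := rfl
  refine .of_pairwise_dual_eq_zero_ne_zero _
    (fun i => (AddMonoidAlgebra.basis ℤ ℂ).coord (2 * i)) (fun i j hij => ?_) (fun i => ?_)
  · have : (i : ℕ) ≠ j := Fin.val_ne_of_ne hij
    simp only [symmMonomial, hT, map_add, Module.Basis.coord_apply, Module.Basis.repr_self,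
      Finsupp.single_apply]
    split_ifs <;> norm_num <;> omega
  · simp only [symmMonomial, hT, map_add, Module.Basis.coord_apply, Module.Basis.repr_self,
      Finsupp.single_apply]
    split_ifs <;> norm_num

lemma T_add_T_neg_mem_span_symmMonomial {k : ℕ} {n : ℤ} (hn : Even n) (hnk : n.natAbs ≤ k) :
    T n + T (-n) ∈ Submodule.span ℂ (Set.range fun j : Fin (k / 2 + 1) => symmMonomial j) := by
  obtain ⟨r, rfl⟩ := hn
  refine Submodule.subset_span ⟨⟨r.natAbs, by omega⟩, ?_⟩
  show T (2 * (r.natAbs : ℤ)) + T (-(2 * (r.natAbs : ℤ))) = T (r + r) + T (-(r + r))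
  rcases le_total 0 r with hr | hr
  · rw [show 2 * (r.natAbs : ℤ) = r + r by omega]
  · rw [show 2 * (r.natAbs : ℤ) = -(r + r) by omega, neg_neg, add_comm]

namespace Bprime

lemma aB_mul_aB : aB * aB = (4 : ℂ)⁻¹ • (zB * zB) := by
  simpa [aB, zB] using RingQuot.mkAlgHom_rel ℂ BpRel.ha

lemma bB_mul_bB : bB * bB = (4 : ℂ)⁻¹ • (zB * zB) := by
  simpa [bB, zB] using RingQuot.mkAlgHom_rel ℂ BpRel.hb

lemma commute_zB_aB : Commute zB aB := by
  show zB * aB = aB * zB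
  simpa [aB, zB] using RingQuot.mkAlgHom_rel ℂ BpRel.hza

lemma commute_zB_bB : Commute zB bB := by
  show zB * bB = bB * zB
  simpa [bB, zB] using RingQuot.mkAlgHom_rel ℂ BpRel.hzb

lemma adjoin_range_genB : Algebra.adjoin ℂ (Set.range genB) = ⊤ := by
  have hgen : Set.range genB = RingQuot.mkAlgHom ℂ BpRel '' Set.range (FreeAlgebra.ι ℂ) := by
    rw [← Set.range_comp]
    congr
    funext i
    fin_cases i <;> rfl
  rw [hgen, ← AlgHom.map_adjoin, FreeAlgebra.adjoin_range_ι, Algebra.map_top, AlgHom.range_eq_top]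
  exact RingQuot.mkAlgHom_surjective ℂ BpRel

lemma mem_center_of_forall_commute_genB {x : Bprime} (h : ∀ i, Commute x (genB i)) :
    x ∈ Subalgebra.center ℂ Bprime :=
  Subalgebra.mem_center_iff.mpr fun y => (Algebra.commute_of_mem_adjoin_of_forall_mem_commute
    (adjoin_range_genB ▸ Algebra.mem_top) (by rintro _ ⟨i, rfl⟩; exact h i)).eq.symm

lemma zB_mem_center : zB ∈ Subalgebra.center ℂ Bprime :=
  mem_center_of_forall_commute_genB fun i => by
    fin_cases i
    exacts [commute_zB_aB, commute_zB_bB, Commute.refl zB]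

lemma mul_pow_add_mul_pow_mem_center (j : ℕ) :
    (aB * bB) ^ j + (bB * aB) ^ j ∈ Subalgebra.center ℂ Bprime := by
  have hzz (y : Bprime) : Commute (zB * zB) y :=
    (Subalgebra.mem_center_iff.mp (mul_mem zB_mem_center zB_mem_center) y).symm
  have ha : Commute (aB * aB) bB := aB_mul_aB ▸ (hzz bB).smul_left _
  have hb : Commute (bB * bB) aB := bB_mul_bB ▸ (hzz aB).smul_left _
  refine mem_center_of_forall_commute_genB fun i => ?_
  fin_cases i
  · exact (ha.mul_pow_add_mul_pow j).symm
  · exact (add_comm ((bB * aB) ^ j) _ ▸ hb.mul_pow_add_mul_pow j).symm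
  · exact Subalgebra.mem_center_iff.mp zB_mem_center _

instance : SetLike.GradedMonoid BprimeDeg where
  one_mem := Submodule.subset_span ⟨[], rfl, by simp⟩
  mul_mem m n x y hx hy := by
    have hle : BprimeDeg m * BprimeDeg n ≤ BprimeDeg (m + n) := by
      rw [BprimeDeg, BprimeDeg, Submodule.span_mul_span, Submodule.span_le]
      rintro _ ⟨_, ⟨l₁, rfl, rfl⟩, _, ⟨l₂, rfl, rfl⟩, rfl⟩
      exact Submodule.subset_span ⟨l₁ ++ l₂, by simp, by simp⟩
    exact hle (Submodule.mul_mem_mul hx hy)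

lemma genB_mem_BprimeDeg_one (i : Fin 3) : genB i ∈ BprimeDeg 1 :=
  Submodule.subset_span ⟨[i], rfl, by simp⟩

noncomputable def centralElt (k j : ℕ) : Bprime :=
  zB ^ (k - 2 * j) * ((aB * bB) ^ j + (bB * aB) ^ j)

lemma centralElt_mem_center (k j : ℕ) : centralElt k j ∈ Subalgebra.center ℂ Bprime :=
  mul_mem (pow_mem zB_mem_center _) (mul_pow_add_mul_pow_mem_center j)

lemma centralElt_mem_BprimeDeg {k j : ℕ} (hj : 2 * j ≤ k) : centralElt k j ∈ BprimeDeg k := by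
  have hab := SetLike.mul_mem_graded (genB_mem_BprimeDeg_one 0) (genB_mem_BprimeDeg_one 1)
  have hba := SetLike.mul_mem_graded (genB_mem_BprimeDeg_one 1) (genB_mem_BprimeDeg_one 0)
  have := SetLike.mul_mem_graded (SetLike.pow_mem_graded (k - 2 * j) (genB_mem_BprimeDeg_one 2))
    (add_mem (SetLike.pow_mem_graded j hab) (SetLike.pow_mem_graded j hba))
  rwa [smul_eq_mul, smul_eq_mul, show (k - 2 * j) * 1 + j * (1 + 1) = k by omega] at this

noncomputable def repGen : Fin 3 → Matrix (Fin 2) (Fin 2) ℂ[T;T⁻¹]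
  | 0 => dihedralMatrix 1
  | 1 => dihedralMatrix (-1)
  | 2 => algebraMap ℂ _ 2

noncomputable def rep : Bprime →ₐ[ℂ] Matrix (Fin 2) (Fin 2) ℂ[T;T⁻¹] :=
  RingQuot.liftAlgHom ℂ ⟨FreeAlgebra.lift ℂ repGen, by
    have hsq : (4 : ℂ)⁻¹ • (algebraMap ℂ (Matrix (Fin 2) (Fin 2) ℂ[T;T⁻¹]) 2 * algebraMap ℂ _ 2)
        = 1 := by
      rw [Algebra.smul_def, ← map_mul, ← map_mul]; norm_num
    rintro _ _ ⟨⟩ <;> simp only [map_mul, map_smul, FreeAlgebra.lift_ι_apply, repGen]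
    · rw [hsq, dihedralMatrix.mul_of_odd odd_one, sub_self, dihedralMatrix.zero]
    · rw [hsq, dihedralMatrix.mul_of_odd (by decide), sub_self, dihedralMatrix.zero]
    · exact Algebra.commutes _ _
    · exact Algebra.commutes _ _⟩

lemma rep_aB : rep aB = dihedralMatrix 1 := by
  rw [rep, aB, RingQuot.liftAlgHom_mkAlgHom_apply, FreeAlgebra.lift_ι_apply]; rfl

lemma rep_bB : rep bB = dihedralMatrix (-1) := by
  rw [rep, bB, RingQuot.liftAlgHom_mkAlgHom_apply, FreeAlgebra.lift_ι_apply]; rfl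

lemma rep_zB : rep zB = algebraMap ℂ _ 2 := by
  rw [rep, zB, RingQuot.liftAlgHom_mkAlgHom_apply, FreeAlgebra.lift_ι_apply]; rfl

lemma rep_eq_scalar_of_mem_center {x : Bprime} (hx : x ∈ Subalgebra.center ℂ Bprime) :
    rep x = Matrix.scalar (Fin 2) (rep x 0 0) := by
  have hcomm (y : Bprime) : Commute (rep x) (rep y) :=
    (Commute.symm (Subalgebra.mem_center_iff.mp hx y)).map rep
  exact eq_scalar_of_commute_dihedralMatrix (rep_aB ▸ hcomm aB) (rep_bB ▸ hcomm bB)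

-- `altWord n` is `a b a ⋯` with `n` letters if `n > 0`, and `b a b ⋯` with `-n` letters if `n < 0`.
noncomputable def altWord (n : ℤ) : Bprime :=
  if 0 < n then aB * altWord (1 - n) else if n < 0 then bB * altWord (-1 - n) else 1
termination_by n.natAbs

lemma altWord_zero : altWord 0 = 1 := by
  rw [altWord]; simp

lemma aB_mul_altWord_of_nonpos {n : ℤ} (hn : n ≤ 0) : aB * altWord n = altWord (1 - n) := by
  conv_rhs => rw [altWord, if_pos (by omega), sub_sub_cancel]

lemma aB_mul_altWord_of_pos {n : ℤ} (hn : 0 < n) :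
    aB * altWord n = (4 : ℂ)⁻¹ • (zB * zB * altWord (1 - n)) := by
  conv_lhs => rw [altWord, if_pos hn, ← mul_assoc, aB_mul_aB, smul_mul_assoc]

lemma bB_mul_altWord_of_nonneg {n : ℤ} (hn : 0 ≤ n) : bB * altWord n = altWord (-1 - n) := by
  conv_rhs => rw [altWord, if_neg (by omega), if_pos (by omega), sub_sub_cancel]

lemma bB_mul_altWord_of_neg {n : ℤ} (hn : n < 0) :
    bB * altWord n = (4 : ℂ)⁻¹ • (zB * zB * altWord (-1 - n)) := by
  conv_lhs => rw [altWord, if_neg (by omega), if_pos hn, ← mul_assoc, bB_mul_bB, smul_mul_assoc]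

lemma rep_altWord (n : ℤ) : rep (altWord n) = dihedralMatrix n := by
  induction n using altWord.induct with
  | case1 n hn ih =>
    rw [altWord, if_pos hn, map_mul, ih, rep_aB, dihedralMatrix.mul_of_odd odd_one, sub_sub_cancel]
  | case2 n hn hn' ih =>
    rw [altWord, if_neg hn, if_pos hn', map_mul, ih, rep_bB,
      dihedralMatrix.mul_of_odd (by decide), sub_sub_cancel]
  | case3 n hn hn' =>
    rw [show n = 0 by omega, altWord_zero, map_one, dihedralMatrix.zero]

noncomputable def normalForm (k : ℕ) (n : ℤ) : Bprime := zB ^ (k - n.natAbs) * altWord n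

lemma rep_normalForm (k : ℕ) (n : ℤ) :
    rep (normalForm k n) = (2 : ℂ) ^ (k - n.natAbs) • dihedralMatrix n := by
  rw [normalForm, map_mul, map_pow, rep_zB, rep_altWord, ← map_pow, ← Algebra.smul_def]

lemma aB_mul_normalForm {k : ℕ} {n : ℤ} (hn : n.natAbs ≤ k) :
    aB * normalForm k n ∈ ℂ ∙ normalForm (k + 1) (1 - n) := by
  simp only [normalForm]
  rw [← mul_assoc, ← (commute_zB_aB.pow_left _).eq, mul_assoc]
  rcases le_or_gt n 0 with hn₀ | hn₀
  · rw [aB_mul_altWord_of_nonpos hn₀, show k + 1 - (1 - n).natAbs = k - n.natAbs by omega]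
    exact Submodule.mem_span_singleton_self _
  · rw [aB_mul_altWord_of_pos hn₀, mul_smul_comm, ← mul_assoc, ← mul_assoc, ← pow_succ,
      ← pow_succ, show k - n.natAbs + 1 + 1 = k + 1 - (1 - n).natAbs by omega]
    exact Submodule.smul_mem _ _ (Submodule.mem_span_singleton_self _)

lemma bB_mul_normalForm {k : ℕ} {n : ℤ} (hn : n.natAbs ≤ k) :
    bB * normalForm k n ∈ ℂ ∙ normalForm (k + 1) (-1 - n) := by
  simp only [normalForm]
  rw [← mul_assoc, ← (commute_zB_bB.pow_left _).eq, mul_assoc]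
  rcases le_or_gt 0 n with hn₀ | hn₀
  · rw [bB_mul_altWord_of_nonneg hn₀, show k + 1 - (-1 - n).natAbs = k - n.natAbs by omega]
    exact Submodule.mem_span_singleton_self _
  · rw [bB_mul_altWord_of_neg hn₀, mul_smul_comm, ← mul_assoc, ← mul_assoc, ← pow_succ,
      ← pow_succ, show k - n.natAbs + 1 + 1 = k + 1 - (-1 - n).natAbs by omega]
    exact Submodule.smul_mem _ _ (Submodule.mem_span_singleton_self _)

lemma zB_mul_normalForm {k : ℕ} {n : ℤ} (hn : n.natAbs ≤ k) :
    zB * normalForm k n = normalForm (k + 1) n := by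
  rw [normalForm, normalForm, ← mul_assoc, ← pow_succ',
    show k - n.natAbs + 1 = k + 1 - n.natAbs by omega]

lemma genB_mul_normalForm_mem_span (i : Fin 3) {k : ℕ} {n : ℤ} (hn : n.natAbs ≤ k) :
    genB i * normalForm k n ∈
      Submodule.span ℂ (normalForm (k + 1) '' {m | m.natAbs ≤ k + 1}) := by
  have hle (m : ℤ) (hm : m.natAbs ≤ k + 1) : ℂ ∙ normalForm (k + 1) m ≤
      Submodule.span ℂ (normalForm (k + 1) '' {m | m.natAbs ≤ k + 1}) :=
    Submodule.span_mono (Set.singleton_subset_iff.mpr ⟨m, hm, rfl⟩)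
  fin_cases i
  · exact hle _ (by omega) (aB_mul_normalForm hn)
  · exact hle _ (by omega) (bB_mul_normalForm hn)
  · exact hle n (by omega)
      (Submodule.mem_span_singleton.mpr ⟨1, by rw [one_smul]; exact (zB_mul_normalForm hn).symm⟩)

lemma BprimeDeg_le_span_normalForm (k : ℕ) :
    BprimeDeg k ≤ Submodule.span ℂ (normalForm k '' {n | n.natAbs ≤ k}) := by
  suffices h : ∀ l : List (Fin 3), (l.map genB).prod ∈
      Submodule.span ℂ (normalForm l.length '' {n | n.natAbs ≤ l.length}) by
    rw [BprimeDeg, Submodule.span_le]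
    rintro _ ⟨l, rfl, rfl⟩
    exact h l
  intro l
  induction l with
  | nil => exact Submodule.subset_span ⟨0, by simp, by simp [normalForm, altWord_zero]⟩
  | cons i l ih =>
    have hmul : Submodule.span ℂ (normalForm l.length '' {n | n.natAbs ≤ l.length}) ≤
        (Submodule.span ℂ (normalForm (l.length + 1) '' {n | n.natAbs ≤ l.length + 1})).comap
          (LinearMap.mulLeft ℂ (genB i)) :=
      Submodule.span_le.mpr (by rintro _ ⟨n, hn, rfl⟩; exact genB_mul_normalForm_mem_span i hn)
    simpa using hmul ih

lemma eq_zero_of_mem_BprimeDeg_of_rep_row_sum_eq_zero {k : ℕ} {x : Bprime}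
    (hx : x ∈ BprimeDeg k) (h : rep x 0 0 + rep x 0 1 = 0) : x = 0 := by
  let φ : Bprime →ₗ[ℂ] ℂ[T;T⁻¹] := (Matrix.entryLinearMap ℂ ℂ[T;T⁻¹] (0 : Fin 2) (0 : Fin 2) +
    Matrix.entryLinearMap ℂ ℂ[T;T⁻¹] (0 : Fin 2) (1 : Fin 2)) ∘ₗ rep.toLinearMap
  -- `φ` sends `normalForm k n` to `2 ^ (k - |n|) • T n`.
  have hli : LinearIndependent ℂ (φ ∘ normalForm k) := by
    convert (AddMonoidAlgebra.basis ℤ ℂ).linearIndependent.units_smul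
      fun n => Units.mk0 ((2 : ℂ) ^ (k - n.natAbs)) (pow_ne_zero _ two_ne_zero) using 1
    ext n : 1
    simp [φ, rep_normalForm, dihedralMatrix.apply_zero_zero_add_apply_zero_one]
  have hspan : x ∈ Submodule.span ℂ (Set.range (normalForm k)) :=
    Submodule.span_mono (Set.image_subset_range _ _) (BprimeDeg_le_span_normalForm k hx)
  exact Submodule.disjoint_def.mp (Submodule.range_ker_disjoint hli) x hspan h

lemma trace_rep_normalForm_mem_span {k : ℕ} {n : ℤ} (hn : n.natAbs ≤ k) :
    (rep (normalForm k n)).trace ∈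
      Submodule.span ℂ (Set.range fun j : Fin (k / 2 + 1) => symmMonomial j) := by
  rw [rep_normalForm, Matrix.trace_smul, dihedralMatrix.trace_eq]
  refine Submodule.smul_mem _ _ ?_
  split_ifs with hev
  · exact T_add_T_neg_mem_span_symmMonomial hev hn
  · exact zero_mem _

lemma rep_apply_zero_zero_mem_span {k : ℕ} {x : Bprime} (hx : x ∈ BprimeDeg k)
    (hc : x ∈ Subalgebra.center ℂ Bprime) :
    rep x 0 0 ∈ Submodule.span ℂ (Set.range fun j : Fin (k / 2 + 1) => symmMonomial j) := by
  set S := Submodule.span ℂ (Set.range fun j : Fin (k / 2 + 1) => symmMonomial j)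
  have htr : (rep x).trace ∈ S := by
    have hle : Submodule.span ℂ (normalForm k '' {n | n.natAbs ≤ k}) ≤
        S.comap (Matrix.traceLinearMap (Fin 2) ℂ ℂ[T;T⁻¹] ∘ₗ rep.toLinearMap) :=
      Submodule.span_le.mpr (by rintro _ ⟨n, hn, rfl⟩; exact trace_rep_normalForm_mem_span hn)
    exact hle (BprimeDeg_le_span_normalForm k hx)
  have htwo : (rep x).trace = (2 : ℂ) • rep x 0 0 := by
    rw [rep_eq_scalar_of_mem_center hc]
    simp [two_smul]
  have := S.smul_mem (2 : ℂ)⁻¹ htr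
  rwa [htwo, smul_smul, inv_mul_cancel₀ two_ne_zero, one_smul] at this

lemma rep_centralElt_apply_zero_zero (k j : ℕ) :
    rep (centralElt k j) 0 0 = (2 : ℂ) ^ (k - 2 * j) • symmMonomial j := by
  have hab : rep (aB * bB) = dihedralMatrix 2 := by
    rw [map_mul, rep_aB, rep_bB, dihedralMatrix.mul_of_odd odd_one]; norm_num
  have hba : rep (bB * aB) = dihedralMatrix (-2) := by
    rw [map_mul, rep_aB, rep_bB, dihedralMatrix.mul_of_odd (by decide)]; norm_num
  rw [centralElt, map_mul, map_pow, rep_zB, ← map_pow, ← Algebra.smul_def, map_add, map_pow,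
    map_pow, hab, hba, dihedralMatrix.pow_of_even (by decide),
    dihedralMatrix.pow_of_even (by decide)]
  simp only [Matrix.smul_apply, Matrix.add_apply, symmMonomial]
  rw [dihedralMatrix.apply_zero_zero_of_even (by simp),
    dihedralMatrix.apply_zero_zero_of_even (by simp)]
  ring_nf

noncomputable def centerEntry (k : ℕ) :
    ↥(BprimeDeg k ⊓ Subalgebra.toSubmodule (Subalgebra.center ℂ Bprime)) →ₗ[ℂ] ℂ[T;T⁻¹] :=
  Matrix.entryLinearMap ℂ ℂ[T;T⁻¹] (0 : Fin 2) (0 : Fin 2) ∘ₗ rep.toLinearMap ∘ₗ Submodule.subtype _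

lemma centerEntry_injective (k : ℕ) : Function.Injective (centerEntry k) := by
  rintro ⟨x, hxk, hxc⟩ ⟨y, hyk, hyc⟩ hxy
  have h₀₀ : rep (x - y) 0 0 = 0 := by simpa [centerEntry, sub_eq_zero] using hxy
  have h₀₁ : rep (x - y) 0 1 = 0 := by
    rw [rep_eq_scalar_of_mem_center (sub_mem hxc hyc)]
    simp
  refine Subtype.ext (sub_eq_zero.mp ?_)
  exact eq_zero_of_mem_BprimeDeg_of_rep_row_sum_eq_zero (sub_mem hxk hyk)
    (by rw [h₀₀, h₀₁, add_zero])

lemma range_centerEntry (k : ℕ) : LinearMap.range (centerEntry k) =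
    Submodule.span ℂ (Set.range fun j : Fin (k / 2 + 1) => symmMonomial j) := by
  refine le_antisymm ?_ (Submodule.span_le.mpr ?_)
  · rintro _ ⟨⟨x, hxk, hxc⟩, rfl⟩
    exact rep_apply_zero_zero_mem_span hxk hxc
  · rintro _ ⟨j, rfl⟩
    have hmem : centralElt k j ∈
        BprimeDeg k ⊓ Subalgebra.toSubmodule (Subalgebra.center ℂ Bprime) :=
      ⟨centralElt_mem_BprimeDeg (by omega), centralElt_mem_center k j⟩
    have h := (LinearMap.range (centerEntry k)).smul_mem ((2 : ℂ) ^ (k - 2 * (j : ℕ)))⁻¹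
      (LinearMap.mem_range_self _ ⟨_, hmem⟩)
    rwa [show centerEntry k ⟨_, hmem⟩ = _ from rep_centralElt_apply_zero_zero k j,
      inv_smul_smul₀ (pow_ne_zero _ two_ne_zero)] at h

end Bprime

/-- for every `k ≥ 0`, the degree-`2k` component of the center of `B'`
has dimension `1 + ⌊k/2⌋`. -/
theorem Bprime_center_graded_dimension (k : ℕ) :
    Module.finrank ℂ
      ↥(BprimeDeg k ⊓ Subalgebra.toSubmodule (Subalgebra.center ℂ Bprime))
      = 1 + k / 2 := by
  rw [← LinearMap.finrank_range_of_inj (Bprime.centerEntry_injective k),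
    Bprime.range_centerEntry, finrank_span_eq_card (linearIndependent_symmMonomial _),
    Fintype.card_fin, add_comm]
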